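/- Let $(R,\mathfrak{m})$ be a two-dimensional regular local ring with regular system of parameters $x, y$, and let $0 < \alpha < \beta < n$ be integers. Set $I = (x^3, x^2y^{\alpha}, xy^{\beta}, y^n)$ and $Q = (x^3, y^n)$. Then $Q : I = (x^2, xy^{n-\beta}, y^{n-\alpha})$. -/

import Mathlib

/-!
The geometry of `R` enters only through one fact: `x` is a prime element that does not divide
`y`. Indeed `R ⧸ (x)` is a Noetherian local ring of dimension at least `dim R - 1 ≥ 1` whose
maximal ideal is principal, so by Krull's intersection theorem every nonzero element is a unit
times a power of `y`, and it is a domain; and `x ∣ y` or `x = 0` would make `𝔪` principal,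
forcing `dim R ≤ 1`.

Given this, for `p` prime the rules `(pᵃ, v w) : v ⊆ (pᵃ, w)` when `p ∤ v` and
`(pᵃ⁺ⁱ, w) : pⁱ ⊆ (pᵃ, w)` when `p ∤ w` compute the colon: from `z x yᵝ ∈ Q` they give
`z = f x² + d y^(n-β)`, and then `z x² yᵅ ∈ Q` gives `d ∈ (x, y^(β-α))`.
-/

open IsLocalRing

namespace IsLocalRing

variable {A : Type*} [CommRing A] [IsLocalRing A] {t : A}

lemma ringKrullDim_le_one_of_maximalIdeal_eq_span_singleton [IsNoetherianRing A]
    (ht : maximalIdeal A = Ideal.span {t}) : ringKrullDim A ≤ 1 := by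
  refine (ringKrullDim_le_spanFinrank_maximalIdeal (R := A)).trans ?_
  have h : (maximalIdeal A).spanFinrank ≤ 1 := by
    rw [ht]
    exact (Submodule.spanFinrank_span_le_ncard_of_finite (R := A) (Set.finite_singleton t)).trans
      (Set.ncard_singleton t).le
  exact_mod_cast h

lemma krullDimLE_zero_of_maximalIdeal_eq_span_singleton (ht : maximalIdeal A = Ideal.span {t})
    (hnil : IsNilpotent t) : Ring.KrullDimLE 0 A := by
  refine Ring.krullDimLE_zero_iff.mpr fun p hp => ?_
  obtain ⟨k, hk⟩ := hnil
  have hmp : maximalIdeal A ≤ p := by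
    rw [ht, Ideal.span_le, Set.singleton_subset_iff]
    exact hp.mem_of_pow_mem k (hk ▸ p.zero_mem)
  exact le_antisymm (le_maximalIdeal hp.ne_top) hmp ▸ maximalIdeal.isMaximal A

lemma exists_eq_pow_mul_isUnit_of_maximalIdeal_eq_span_singleton [IsNoetherianRing A] {a : A}
    (ht : maximalIdeal A = Ideal.span {t}) (ha : a ≠ 0) :
    ∃ (i : ℕ) (u : A), IsUnit u ∧ a = t ^ i * u := by
  have hfin : FiniteMultiplicity t a := by
    by_contra h
    refine ha (Ideal.mem_bot.mp ?_)
    rw [← Ideal.iInf_pow_eq_bot_of_isLocalRing _ (maximalIdeal.isMaximal A).ne_top,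
      Submodule.mem_iInf]
    intro i
    rw [ht, Ideal.span_singleton_pow, Ideal.mem_span_singleton]
    exact FiniteMultiplicity.not_iff_forall.mp h i
  obtain ⟨u, hau, htu⟩ := hfin.exists_eq_pow_mul_and_not_dvd
  exact ⟨_, u, notMem_maximalIdeal.mp (by rwa [ht, Ideal.mem_span_singleton]), hau⟩

lemma isDomain_of_maximalIdeal_eq_span_singleton [IsNoetherianRing A]
    (ht : maximalIdeal A = Ideal.span {t}) (hnil : ¬ IsNilpotent t) : IsDomain A := by
  have : NoZeroDivisors A := ⟨fun {a b} hab => by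
    by_contra! h
    obtain ⟨i, u, hu, rfl⟩ := exists_eq_pow_mul_isUnit_of_maximalIdeal_eq_span_singleton ht h.1
    obtain ⟨j, v, hv, rfl⟩ := exists_eq_pow_mul_isUnit_of_maximalIdeal_eq_span_singleton ht h.2
    exact hnil ⟨i + j, (hu.mul hv).mul_left_eq_zero.mp (by linear_combination hab)⟩⟩
  exact NoZeroDivisors.to_isDomain A

end IsLocalRing

section MaximalIdealSpanPair

variable {R : Type*} [CommRing R] [IsNoetherianRing R] [IsLocalRing R]

lemma maximalIdeal_ne_span_singleton_of_one_lt_ringKrullDim (hdim : 1 < ringKrullDim R) (t : R) :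
    maximalIdeal R ≠ Ideal.span {t} := fun ht =>
  (ringKrullDim_le_one_of_maximalIdeal_eq_span_singleton ht).not_gt hdim

lemma not_dvd_of_maximalIdeal_eq_span_pair {x y : R} (hm : maximalIdeal R = Ideal.span {x, y})
    (hdim : 1 < ringKrullDim R) : ¬ x ∣ y := fun hxy =>
  maximalIdeal_ne_span_singleton_of_one_lt_ringKrullDim hdim x
    (hm.trans (Ideal.span_pair_eq_span_left_iff_dvd.mpr hxy))

lemma prime_of_maximalIdeal_eq_span_pair {x y : R} (hm : maximalIdeal R = Ideal.span {x, y})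
    (hdim : 1 < ringKrullDim R) : Prime x := by
  have hx0 : x ≠ 0 := by
    rintro rfl
    exact maximalIdeal_ne_span_singleton_of_one_lt_ringKrullDim hdim y
      (hm.trans Ideal.span_insert_zero)
  refine (Ideal.span_singleton_prime hx0).mp ?_
  rw [← Ideal.Quotient.isDomain_iff_prime]
  have hxm : x ∈ maximalIdeal R := hm ▸ Ideal.subset_span (Set.mem_insert x {y})
  have : Nontrivial (R ⧸ Ideal.span {x}) :=
    Ideal.Quotient.nontrivial_iff.mpr (Ideal.span_singleton_ne_top hxm)
  have : IsLocalRing (R ⧸ Ideal.span {x}) :=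
    IsLocalRing.of_surjective' (Ideal.Quotient.mk _) Ideal.Quotient.mk_surjective
  have hmA : maximalIdeal (R ⧸ Ideal.span {x}) = Ideal.span {Ideal.Quotient.mk _ y} := by
    rw [← map_maximalIdeal_of_surjective _ Ideal.Quotient.mk_surjective, hm, Ideal.map_span,
      Set.image_pair, Ideal.Quotient.eq_zero_iff_mem.mpr (Ideal.mem_span_singleton_self x),
      Ideal.span_insert_zero]
  have hdimA : ¬ Ring.KrullDimLE 0 (R ⧸ Ideal.span {x}) := fun h => by
    have hquot := ringKrullDim_le_ringKrullDim_quotient_add_card {x}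
      (by simpa [ringJacobson_eq_maximalIdeal] using hxm)
    rw [Finset.coe_singleton, Finset.card_singleton] at hquot
    exact (hquot.trans (add_le_add_left (Ring.krullDimLE_iff.mp h) _)).not_gt (by simpa using hdim)
  exact IsLocalRing.isDomain_of_maximalIdeal_eq_span_singleton hmA
    fun hnil => hdimA (krullDimLE_zero_of_maximalIdeal_eq_span_singleton hmA hnil)

end MaximalIdealSpanPair

section PowPair

variable {R : Type*} [CommRing R] {p v w x y z : R} {α β n : ℕ}

lemma span_le_colon_span_pow_pair (hαβ : α ≤ β) (hβn : β ≤ n) :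
    Ideal.span {x ^ 2, x * y ^ (n - β), y ^ (n - α)} ≤
      (Ideal.span {x ^ 3, y ^ n}).colon
        (Ideal.span {x ^ 3, x ^ 2 * y ^ α, x * y ^ β, y ^ n} : Set R) := by
  have hx3 {w : R} (h : x ^ 3 ∣ w) : w ∈ Ideal.span {x ^ 3, y ^ n} :=
    Ideal.mem_of_dvd _ h (Ideal.subset_span (by simp))
  have hyn {w : R} (h : y ^ n ∣ w) : w ∈ Ideal.span {x ^ 3, y ^ n} :=
    Ideal.mem_of_dvd _ h (Ideal.subset_span (by simp))
  have hβ : y ^ (n - β) * y ^ β = y ^ n := pow_sub_mul_pow y hβn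
  have hα : y ^ (n - α) * y ^ α = y ^ n := pow_sub_mul_pow y (hαβ.trans hβn)
  have hαβ' : y ^ (n - α) * y ^ β = y ^ n * y ^ (β - α) := by
    rw [← pow_add, ← pow_add]
    congr 1
    omega
  rw [Ideal.span_le]
  intro g hg
  rw [SetLike.mem_coe, Ideal.colon_span, Submodule.mem_colon]
  intro s hs
  simp only [Set.mem_insert_iff, Set.mem_singleton_iff] at hg hs
  rw [smul_eq_mul]
  rcases hg with rfl | rfl | rfl <;> rcases hs with rfl | rfl | rfl | rfl
  · exact hx3 ⟨x ^ 2, by ring⟩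
  · exact hx3 ⟨x * y ^ α, by ring⟩
  · exact hx3 ⟨y ^ β, by ring⟩
  · exact hyn ⟨x ^ 2, by ring⟩
  · exact hx3 ⟨x * y ^ (n - β), by ring⟩
  · exact hx3 ⟨y ^ (n - β) * y ^ α, by ring⟩
  · exact hyn ⟨x ^ 2, by linear_combination x ^ 2 * hβ⟩
  · exact hyn ⟨x * y ^ (n - β), by ring⟩
  · exact hx3 ⟨y ^ (n - α), by ring⟩
  · exact hyn ⟨x ^ 2, by linear_combination x ^ 2 * hα⟩
  · exact hyn ⟨x * y ^ (β - α), by linear_combination x * hαβ'⟩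
  · exact hyn ⟨y ^ (n - α), by ring⟩

variable [IsDomain R]

lemma mem_span_pow_pair_of_mul_mem (hp : Prime p) (hv : ¬ p ∣ v) {a : ℕ}
    (h : z * v ∈ Ideal.span {p ^ a, v * w}) : z ∈ Ideal.span {p ^ a, w} := by
  obtain ⟨c, d, hcd⟩ := Ideal.mem_span_pair.mp h
  obtain ⟨e, he⟩ := hp.pow_dvd_of_dvd_mul_left (b := z - d * w) a hv
    ⟨c, by linear_combination -hcd⟩
  exact Ideal.mem_span_pair.mpr ⟨e, d, by linear_combination -he⟩

lemma mem_span_pow_pair_of_mul_pow_mem (hp : Prime p) (hw : ¬ p ∣ w) {a i : ℕ}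
    (h : z * p ^ i ∈ Ideal.span {p ^ (a + i), w}) : z ∈ Ideal.span {p ^ a, w} := by
  obtain ⟨c, d, hcd⟩ := Ideal.mem_span_pair.mp h
  obtain ⟨e, rfl⟩ := hp.pow_dvd_of_dvd_mul_right (a := d) i hw
    ⟨z - c * p ^ a, by linear_combination hcd⟩
  refine Ideal.mem_span_pair.mpr ⟨c, e, mul_left_cancel₀ (pow_ne_zero i hp.ne_zero) ?_⟩
  linear_combination hcd

lemma mem_span_of_mul_mem_span_pow_pair (hx : Prime x) (hxy : ¬ x ∣ y) (hαβ : α ≤ β)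
    (hβn : β ≤ n)
    (h₂ : z * (x ^ 2 * y ^ α) ∈ Ideal.span {x ^ 3, y ^ n})
    (h₁ : z * (x * y ^ β) ∈ Ideal.span {x ^ 3, y ^ n}) :
    z ∈ Ideal.span {x ^ 2, x * y ^ (n - β), y ^ (n - α)} := by
  have hxy_pow (k : ℕ) : ¬ x ∣ y ^ k := fun h => hxy (hx.dvd_of_dvd_pow h)
  have hz : z ∈ Ideal.span {x ^ 2, y ^ (n - β)} := by
    refine mem_span_pow_pair_of_mul_mem hx (hxy_pow β) ?_
    rw [pow_mul_pow_sub y hβn]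
    refine mem_span_pow_pair_of_mul_pow_mem (i := 1) hx (hxy_pow n) ?_
    convert h₁ using 1
    ring
  obtain ⟨f, d, rfl⟩ := Ideal.mem_span_pair.mp hz
  have hd : d ∈ Ideal.span {x ^ 1, y ^ (β - α)} := by
    refine mem_span_pow_pair_of_mul_mem (v := y ^ (n - β + α)) hx (hxy_pow _) ?_
    rw [← pow_add, show n - β + α + (β - α) = n by omega]
    refine mem_span_pow_pair_of_mul_pow_mem (i := 2) hx (hxy_pow n) ?_
    have hx3 : x ^ 3 * (x * y ^ α * f) ∈ Ideal.span {x ^ 3, y ^ n} :=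
      Ideal.mul_mem_right _ _ (Ideal.subset_span (Set.mem_insert _ _))
    convert sub_mem h₂ hx3 using 1
    rw [pow_add]
    ring
  obtain ⟨e, g, rfl⟩ := Ideal.mem_span_pair.mp hd
  have hy : y ^ (β - α) * y ^ (n - β) = y ^ (n - α) := by
    rw [← pow_add]
    congr 1
    omega
  have hsum : (f * x ^ 2 + (e * x ^ 1 + g * y ^ (β - α)) * y ^ (n - β)) =
      f * x ^ 2 + e * (x * y ^ (n - β)) + g * y ^ (n - α) := by
    rw [← hy]
    ring
  rw [hsum]
  refine add_mem (add_mem ?_ ?_) ?_ <;> exact Ideal.mul_mem_left _ _ (Ideal.subset_span (by simp))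

lemma colon_span_pow_pair_eq (hx : Prime x) (hxy : ¬ x ∣ y) (hαβ : α ≤ β)
    (hβn : β ≤ n) :
    (Ideal.span {x ^ 3, y ^ n}).colon
        (Ideal.span {x ^ 3, x ^ 2 * y ^ α, x * y ^ β, y ^ n} : Set R) =
      Ideal.span {x ^ 2, x * y ^ (n - β), y ^ (n - α)} := by
  refine le_antisymm (fun z hz => ?_) (span_le_colon_span_pow_pair hαβ hβn)
  rw [Submodule.mem_colon] at hz
  exact mem_span_of_mul_mem_span_pow_pair hx hxy hαβ hβn
    (hz _ (Ideal.subset_span (by simp))) (hz _ (Ideal.subset_span (by simp)))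

end PowPair

theorem colon_computation_general {R : Type*} [CommRing R] [IsDomain R] [IsNoetherianRing R]
    [IsLocalRing R] (x y : R) (hm : maximalIdeal R = Ideal.span {x, y})
    (hdim : ringKrullDim R = 2)
    (α β n : ℕ) (hαβ : α < β) (hβn : β < n)
    (I Q : Ideal R)
    (hI : I = Ideal.span {x ^ 3, x ^ 2 * y ^ α, x * y ^ β, y ^ n})
    (hQ : Q = Ideal.span {x ^ 3, y ^ n}) :
    Q.colon I = Ideal.span {x ^ 2, x * y ^ (n - β), y ^ (n - α)} := by
  subst hI hQ
  have hdim' : 1 < ringKrullDim R := hdim ▸ by decide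
  exact colon_span_pow_pair_eq (prime_of_maximalIdeal_eq_span_pair hm hdim')
    (not_dvd_of_maximalIdeal_eq_span_pair hm hdim') hαβ.le hβn.le

/-- For `0 < α < β < n`, `I = (x³, x²yᵅ, xyᵝ, yⁿ)` and `Q = (x³, yⁿ)`:
`Q : I = (x², xy^(n-β), y^(n-α))`. -/
theorem colon_computation {R : Type*} [CommRing R] [IsDomain R] [IsNoetherianRing R]
    [IsLocalRing R] (x y : R) (hm : maximalIdeal R = Ideal.span {x, y})
    (hdim : ringKrullDim R = 2)
    (α β n : ℕ) (hα : 0 < α) (hαβ : α < β) (hβn : β < n)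
    (I Q : Ideal R)
    (hI : I = Ideal.span {x ^ 3, x ^ 2 * y ^ α, x * y ^ β, y ^ n})
    (hQ : Q = Ideal.span {x ^ 3, y ^ n}) :
    Q.colon I = Ideal.span {x ^ 2, x * y ^ (n - β), y ^ (n - α)} :=
  colon_computation_general x y hm hdim α β n hαβ hβn I Q hI hQ
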